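/- Let p > 0, 0 < b < 2p, 0 < τ < b(4p-b)/(4(2p-b)), and p < a < p + b. Set r₄ = √(p² + τ²) and M = {x ∈ ℝ² : |x - (τ,0)| < r₄} ∩ {x ∈ ℝ² : |x - (-τ,0)| < r₄}. Then the open disk of radius (a+p)/2 - b centered at the origin is contained in M: {x ∈ ℝ² : |x| < (a+p)/2 - b} ⊆ M. -/
import Mathlib


open Real

/-- The point `(a, b) ∈ ℝ²` (Euclidean). -/
noncomputable def pt (a b : ℝ) : EuclideanSpace ℝ (Fin 2) :=
  (WithLp.equiv 2 (Fin 2 → ℝ)).symm ![a, b]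

lemma pt_norm (c : ℝ) : ‖pt c 0‖ = |c| := by
  rw [EuclideanSpace.norm_eq]
  simp [pt, Fin.sum_univ_two, Real.sqrt_sq_eq_abs]

/-- If `0 < b < 2p`, `0 < τ < b(4p-b)/(4(2p-b))` and `p < a < p + b`, then the open disk
of radius `(a+p)/2 - b` about the origin is contained in the lens
`M = B((τ,0), r₄) ∩ B((-τ,0), r₄)` with `r₄ = √(p²+τ²)`. -/
theorem stmt11 (p b τ a : ℝ) (hp : 0 < p) (hb : 0 < b) (hb' : b < 2 * p)
    (hτ : 0 < τ) (hτ' : τ < b * (4 * p - b) / (4 * (2 * p - b)))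
    (ha : p < a) (ha' : a < p + b) :
    {x : EuclideanSpace ℝ (Fin 2) | ‖x‖ < (a + p) / 2 - b}
      ⊆ {x : EuclideanSpace ℝ (Fin 2) | ‖x - pt τ 0‖ < Real.sqrt (p^2 + τ^2)}
        ∩ {x : EuclideanSpace ℝ (Fin 2) | ‖x - pt (-τ) 0‖ < Real.sqrt (p^2 + τ^2)} := by
  intro x hx
  simp only [Set.mem_setOf_eq] at hx
  have h1 : τ * (4 * (2 * p - b)) < b * (4 * p - b) := by
    rw [lt_div_iff₀ (by linarith)] at hτ'
    exact hτ'
  have h2 : ‖x‖ < p - b / 2 := by linarith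
  have hlt : ‖x‖ + τ < Real.sqrt (p ^ 2 + τ ^ 2) := by
    rw [show (‖x‖ + τ) = Real.sqrt ((‖x‖ + τ) ^ 2) from
      (Real.sqrt_sq (by positivity)).symm]
    apply Real.sqrt_lt_sqrt (by positivity)
    nlinarith [norm_nonneg x, mul_pos hτ (sub_pos.2 h2)]
  constructor <;> · 
    simp only [Set.mem_setOf_eq]
    calc ‖x - pt _ 0‖ ≤ ‖x‖ + ‖pt _ 0‖ := norm_sub_le _ _
      _ < Real.sqrt (p ^ 2 + τ ^ 2) := by
        rw [pt_norm]
        first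
        | (rw [abs_of_pos hτ]; exact hlt)
        | (rw [abs_neg, abs_of_pos hτ]; exact hlt)
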